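/- Let X_i ⊆ ℝ^{m_i} be nonempty closed convex, X = ∏_{j=1}^n X_j, let f : ℝ^N → ℝ be continuously differentiable, g_i : ℝ^{m_i} → ℝ convex, and let f̃_i : X_i × X → ℝ be such that f̃_i(·,x) is continuously differentiable and τ-strongly convex on X_i and satisfies the gradient consistency condition ∇_{x_i} f̃_i(x_i, x) = ∇_{x_i} f(x) for all x ∈ X (where x_i is the i-th block of x). Fix x ∈ X and let x̂_i = argmin_{u ∈ X_i} f̃_i(u,x) + g_i(u). Then ⟨∇_{x_i} f(x), x̂_i − x_i⟩ + g_i(x̂_i) − g_i(x_i) ≤ −τ‖x̂_i − x_i‖². -/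

import Mathlib

/-!
The function `u ↦ f̃_i(u, x) + g_i(u)` is `τ`-strongly convex on `X_i`, so at its minimizer `x̂_i`
it grows at least quadratically: its value at `x_i` exceeds its value at `x̂_i` by
`τ/2 ‖x̂_i − x_i‖²`. The strong convexity inequality of `f̃_i(·, x)` at `x_i`, whose gradient there
is `∇_{x_i} f(x)` by consistency, contributes the other `τ/2 ‖x̂_i − x_i‖²`.
-/

open scoped RealInnerProductSpace
open Filter Topology Finset

noncomputable section

/-- The product space `ℝ^N = ℝ^{m_1} × … × ℝ^{m_n}` with the Euclidean norm. -/
abbrev TS (n : ℕ) (m : Fin n → ℕ) := PiLp 2 fun j => EuclideanSpace ℝ (Fin (m j))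

section

variable {E : Type*} [NormedAddCommGroup E] [InnerProductSpace ℝ E] {s : Set E} {m : ℝ} {f : E → ℝ}

lemma strongConvexOn_of_add_inner_le (hs : Convex ℝ s) (f' : E → E)
    (h : ∀ x ∈ s, ∀ y ∈ s, f y + ⟪f' y, x - y⟫ + m / 2 * ‖x - y‖ ^ 2 ≤ f x) :
    StrongConvexOn s m f := by
  refine ⟨hs, fun x hx y hy a b ha hb hab => ?_⟩
  set z := a • x + b • y with hz_def
  have hz : z ∈ s := hs hx hy ha hb hab
  obtain rfl : a = 1 - b := eq_sub_of_add_eq hab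
  have hxz : x - z = b • (x - y) := by rw [hz_def]; module
  have hyz : y - z = (-(1 - b)) • (x - y) := by rw [hz_def]; module
  have hx' := h x hx z hz
  have hy' := h y hy z hz
  rw [hxz, inner_smul_right, norm_smul, Real.norm_of_nonneg hb] at hx'
  rw [hyz, inner_smul_right, norm_smul, norm_neg, Real.norm_of_nonneg ha] at hy'
  simp only [smul_eq_mul]
  linear_combination (1 - b) * hx' + b * hy'

lemma StrongConvexOn.add_convexOn {g : E → ℝ} (hf : StrongConvexOn s m f)
    (hg : ConvexOn ℝ s g) : StrongConvexOn s m (f + g) := by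
  unfold StrongConvexOn at hf ⊢
  simpa only [add_zero] using hf.add hg.uniformConvexOn_zero

lemma StrongConvexOn.add_sq_norm_sub_le_of_isMinOn {a y : E} (hf : StrongConvexOn s m f)
    (hmin : IsMinOn f s a) (ha : a ∈ s) (hy : y ∈ s) :
    f a + m / 2 * ‖y - a‖ ^ 2 ≤ f y := by
  have hsegment : ∀ t ∈ Set.Ioo (0 : ℝ) 1, f a + (1 - t) * (m / 2 * ‖y - a‖ ^ 2) ≤ f y := by
    rintro t ⟨ht0, ht1⟩
    have hfa : f a ≤ f ((1 - t) • a + t • y) :=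
      hmin (hf.1 ha hy (sub_nonneg.2 ht1.le) ht0.le (sub_add_cancel 1 t))
    have hconv := hf.2 ha hy (sub_nonneg.2 ht1.le) ht0.le (sub_add_cancel 1 t)
    beta_reduce at hconv
    rw [norm_sub_rev, smul_eq_mul, smul_eq_mul] at hconv
    refine le_of_mul_le_mul_left ?_ ht0
    linear_combination hfa + hconv
  have hlim : Tendsto (fun t : ℝ => f a + (1 - t) * (m / 2 * ‖y - a‖ ^ 2)) (𝓝[>] 0)
      (𝓝 (f a + (1 - 0) * (m / 2 * ‖y - a‖ ^ 2))) :=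
    (Continuous.tendsto (by fun_prop) 0).mono_left nhdsWithin_le_nhds
  simpa using le_of_tendsto hlim (eventually_of_mem (Ioo_mem_nhdsGT one_pos) hsegment)

end

theorem stmt2_general
    {n : ℕ} {m : Fin n → ℕ} (i : Fin n)
    (X : ∀ j, Set (EuclideanSpace ℝ (Fin (m j))))
    (hXcv : ∀ j, Convex ℝ (X j))
    (f : TS n m → ℝ)
    (g : EuclideanSpace ℝ (Fin (m i)) → ℝ) (hg : ConvexOn ℝ Set.univ g)
    (ft : EuclideanSpace ℝ (Fin (m i)) → TS n m → ℝ)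
    (τ : ℝ)
    -- `f̃_i(·, y)` is `τ`-strongly convex on `X_i` for every `y ∈ X`
    (hsc : ∀ y : TS n m, (∀ j, y j ∈ X j) → ∀ u ∈ X i, ∀ u' ∈ X i,
      ft u y ≥ ft u' y + ⟪gradient (fun v => ft v y) u', u - u'⟫ + τ / 2 * ‖u - u'‖ ^ 2)
    -- gradient consistency: `∇_{x_i} f̃_i(x_i, x) = ∇_{x_i} f(x)` for all `x ∈ X`
    (hgc : ∀ x : TS n m, (∀ j, x j ∈ X j) →
      gradient (fun u => ft u x) (x i) = gradient f x i)
    -- a fixed point `x ∈ X` and the best response `x̂_i`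
    (x : TS n m) (hx : ∀ j, x j ∈ X j)
    (xhat : EuclideanSpace ℝ (Fin (m i))) (hxhatX : xhat ∈ X i)
    (hxhat : IsMinOn (fun u => ft u x + g u) (X i) xhat) :
    ⟪gradient f x i, xhat - x i⟫ + g xhat - g (x i) ≤ -τ * ‖xhat - x i‖ ^ 2 := by
  have hφ : StrongConvexOn (X i) τ fun u => ft u x :=
    strongConvexOn_of_add_inner_le (hXcv i) _ fun u hu v hv => hsc x hx u hu v hv
  have hF := hφ.add_convexOn (hg.subset (Set.subset_univ _) (hXcv i))
  have hgrowth := hF.add_sq_norm_sub_le_of_isMinOn hxhat hxhatX (hx i)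
  have hlower := hsc x hx xhat hxhatX (x i) (hx i)
  rw [hgc x hx] at hlower
  rw [Pi.add_apply, Pi.add_apply, norm_sub_rev] at hgrowth
  linarith

/-- Descent property of the best response direction:
`⟨∇_{x_i} f(x), x̂_i − x_i⟩ + g_i(x̂_i) − g_i(x_i) ≤ −τ ‖x̂_i − x_i‖²`.
Here the partial gradient `∇_{x_i} f(x)` is the `i`-th block of the full gradient. -/
theorem stmt2
    {n : ℕ} {m : Fin n → ℕ} (i : Fin n)
    (X : ∀ j, Set (EuclideanSpace ℝ (Fin (m j))))
    (hXne : ∀ j, (X j).Nonempty) (hXcl : ∀ j, IsClosed (X j)) (hXcv : ∀ j, Convex ℝ (X j))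
    (f : TS n m → ℝ) (hf : ContDiff ℝ 1 f)
    (g : EuclideanSpace ℝ (Fin (m i)) → ℝ) (hg : ConvexOn ℝ Set.univ g)
    (ft : EuclideanSpace ℝ (Fin (m i)) → TS n m → ℝ)
    (τ : ℝ) (hτ : 0 < τ)
    -- `f̃_i(·, y)` is continuously differentiable for every `y ∈ X`
    (hC1 : ∀ y : TS n m, (∀ j, y j ∈ X j) → ContDiff ℝ 1 fun u => ft u y)
    -- `f̃_i(·, y)` is `τ`-strongly convex on `X_i` for every `y ∈ X`
    (hsc : ∀ y : TS n m, (∀ j, y j ∈ X j) → ∀ u ∈ X i, ∀ u' ∈ X i,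
      ft u y ≥ ft u' y + ⟪gradient (fun v => ft v y) u', u - u'⟫ + τ / 2 * ‖u - u'‖ ^ 2)
    -- gradient consistency: `∇_{x_i} f̃_i(x_i, x) = ∇_{x_i} f(x)` for all `x ∈ X`
    (hgc : ∀ x : TS n m, (∀ j, x j ∈ X j) →
      gradient (fun u => ft u x) (x i) = gradient f x i)
    -- a fixed point `x ∈ X` and the best response `x̂_i`
    (x : TS n m) (hx : ∀ j, x j ∈ X j)
    (xhat : EuclideanSpace ℝ (Fin (m i))) (hxhatX : xhat ∈ X i)
    (hxhat : IsMinOn (fun u => ft u x + g u) (X i) xhat) :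
    ⟪gradient f x i, xhat - x i⟫ + g xhat - g (x i) ≤ -τ * ‖xhat - x i‖ ^ 2 :=
  stmt2_general i X hXcv f g hg ft τ hsc hgc x hx xhat hxhatX hxhat
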